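/- arXiv:2006.15035 — 2 statements merged into one kernel-verified Lean document; each statement's English description precedes it below -/
import Mathlib

section
/- The scaled distribution after a Sinkhorn step satisfies the constraint and decreases KL to any feasible point: with q(x,y) = μ(x) p(x,y)/p_X(x) as above, for every distribution r on X×Y with X-marginal μ, KL(r || p) = KL(r || q) + KL(μ || p_X). In particular KL(r||p) ≥ KL(q||p) = KL(μ||p_X). -/
/-!
Since `q / p` is constant on each fibre `{x} × Y`, equal to `μ x / p_X x`, the cross term
`∑ r log (q / p)` only sees the `X`-marginal of `r`; hence it equals `KL(μ ‖ p_X)` for every `r`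
with marginal `μ`, including `r = q`. Splitting `log (r / p) = log (r / q) + log (q / p)` gives the
identity, and Gibbs' inequality `KL(r ‖ q) ≥ 0` gives the minimality of `q`.
-/

open Finset Real

theorem sub_le_mul_log_div {a b : ℝ} (ha : 0 ≤ a) (hb : 0 < b) : a - b ≤ a * log (a / b) := by
  rcases ha.eq_or_lt with rfl | ha
  · simpa using hb.le
  · have h := one_sub_inv_le_log_of_pos (div_pos ha hb)
    rw [inv_div] at h
    calc a - b = a * (1 - b / a) := by field_simp
      _ ≤ a * log (a / b) := mul_le_mul_of_nonneg_left h ha.le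

theorem sum_mul_log_div_nonneg {ι : Type*} [Fintype ι] {r q : ι → ℝ} (hr : ∀ i, 0 ≤ r i)
    (hq : ∀ i, 0 < q i) (hsum : ∑ i, r i = ∑ i, q i) : 0 ≤ ∑ i, r i * log (r i / q i) :=
  calc (0 : ℝ) = ∑ i, (r i - q i) := by rw [sum_sub_distrib, hsum, sub_self]
    _ ≤ ∑ i, r i * log (r i / q i) :=
      sum_le_sum fun i _ => sub_le_mul_log_div (hr i) (hq i)

theorem mul_log_div_eq_add (a : ℝ) {b c : ℝ} (hb : b ≠ 0) (hc : c ≠ 0) :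
    a * log (a / b) = a * log (a / c) + a * log (c / b) := by
  rcases eq_or_ne a 0 with rfl | ha
  · simp
  · rw [← mul_add, ← log_mul (div_ne_zero ha hc) (div_ne_zero hc hb), div_mul_div_cancel₀ hc]

noncomputable def sinkhornScale {X Y : Type*} [Fintype Y] (p : X × Y → ℝ) (μ : X → ℝ) :
    X × Y → ℝ :=
  fun z => μ z.1 * p z / ∑ y, p (z.1, y)

namespace sinkhornScale

variable {X Y : Type*} [Fintype Y] {p : X × Y → ℝ} {μ : X → ℝ}

theorem pos (hp : ∀ z, 0 < p z) (hμ : ∀ x, 0 < μ x) (hpX : ∀ x, 0 < ∑ y, p (x, y))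
    (z : X × Y) : 0 < sinkhornScale p μ z :=
  div_pos (mul_pos (hμ z.1) (hp z)) (hpX z.1)

theorem sum_fiber {x : X} (hpX : ∑ y, p (x, y) ≠ 0) : ∑ y, sinkhornScale p μ (x, y) = μ x := by
  simp only [sinkhornScale, mul_div_assoc, ← mul_sum, ← sum_div, div_self hpX, mul_one]

theorem apply_div {x : X} {y : Y} (hp : p (x, y) ≠ 0) :
    sinkhornScale p μ (x, y) / p (x, y) = μ x / ∑ y', p (x, y') := by
  rw [sinkhornScale, div_div, mul_div_mul_right _ _ hp]

theorem sum_mul_log_div [Fintype X] (hp : ∀ z, p z ≠ 0) {r : X × Y → ℝ}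
    (hrX : ∀ x, ∑ y, r (x, y) = μ x) :
    ∑ z, r z * log (sinkhornScale p μ z / p z) = ∑ x, μ x * log (μ x / ∑ y, p (x, y)) := by
  simp only [Fintype.sum_prod_type, apply_div (hp _), ← sum_mul, hrX]

end sinkhornScale

theorem sinkhorn_step_pythagorean_general
    {X Y : Type*} [Fintype X] [Fintype Y]
    (p : X × Y → ℝ) (hp : ∀ z, 0 < p z)
    (μ : X → ℝ) (hμ : ∀ x, 0 < μ x)
    (q : X × Y → ℝ)
    (hq : ∀ x y, q (x, y) = μ x * p (x, y) / (∑ y', p (x, y')))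
    (r : X × Y → ℝ) (hr0 : ∀ z, 0 ≤ r z)
    (hrX : ∀ x, ∑ y, r (x, y) = μ x) :
    (∑ z, r z * Real.log (r z / p z)
      = (∑ z, r z * Real.log (r z / q z))
        + ∑ x, μ x * Real.log (μ x / (∑ y, p (x, y)))) ∧
    (∑ z, q z * Real.log (q z / p z)
      = ∑ x, μ x * Real.log (μ x / (∑ y, p (x, y)))) ∧
    (∑ z, q z * Real.log (q z / p z) ≤ ∑ z, r z * Real.log (r z / p z)) := by
  obtain rfl : q = sinkhornScale p μ := funext fun z => hq z.1 z.2
  have hpX (x : X) : 0 < ∑ y, p (x, y) := by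
    have : Nonempty Y := univ_nonempty_iff.mp <|
      nonempty_of_sum_ne_zero ((hrX x).trans_ne (hμ x).ne')
    exact sum_pos (fun y _ => hp (x, y)) univ_nonempty
  have hq_pos := sinkhornScale.pos hp hμ hpX
  have hqX (x : X) := sinkhornScale.sum_fiber (μ := μ) (hpX x).ne'
  have hp0 (z : X × Y) := (hp z).ne'
  have hsplit : ∑ z, r z * log (r z / p z) = ∑ z, r z * log (r z / sinkhornScale p μ z)
      + ∑ x, μ x * log (μ x / ∑ y, p (x, y)) := by
    rw [← sinkhornScale.sum_mul_log_div hp0 hrX, ← sum_add_distrib]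
    exact sum_congr rfl fun z _ => mul_log_div_eq_add _ (hp0 z) (hq_pos z).ne'
  have hq_self := sinkhornScale.sum_mul_log_div hp0 hqX
  have hgibbs : 0 ≤ ∑ z, r z * log (r z / sinkhornScale p μ z) :=
    sum_mul_log_div_nonneg hr0 hq_pos (by simp only [Fintype.sum_prod_type, hrX, hqX])
  exact ⟨hsplit, hq_self, by linarith⟩

/-- Pythagorean identity for the Sinkhorn scaling step. -/
theorem sinkhorn_step_pythagorean
    {X Y : Type*} [Fintype X] [Fintype Y]
    (p : X × Y → ℝ) (hp : ∀ z, 0 < p z) (hpsum : ∑ z, p z = 1)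
    (μ : X → ℝ) (hμ : ∀ x, 0 < μ x) (hμsum : ∑ x, μ x = 1)
    (q : X × Y → ℝ)
    (hq : ∀ x y, q (x, y) = μ x * p (x, y) / (∑ y', p (x, y')))
    (r : X × Y → ℝ) (hr0 : ∀ z, 0 ≤ r z) (hrs : ∑ z, r z = 1)
    (hrX : ∀ x, ∑ y, r (x, y) = μ x) :
    (∑ z, r z * Real.log (r z / p z)
      = (∑ z, r z * Real.log (r z / q z))
        + ∑ x, μ x * Real.log (μ x / (∑ y, p (x, y)))) ∧
    (∑ z, q z * Real.log (q z / p z)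
      = ∑ x, μ x * Real.log (μ x / (∑ y, p (x, y)))) ∧
    (∑ z, q z * Real.log (q z / p z) ≤ ∑ z, r z * Real.log (r z / p z)) :=
  sinkhorn_step_pythagorean_general p hp μ hμ q hq r hr0 hrX
end

section
/- Fixed-point characterization of the constrained two-marginal problem: the minimizer of KL(q||ψ) over joint distributions q on X×Y subject to q_X = μ and q_Y = ν (ψ : X×Y → ℝ_{>0}) has the form q(x,y) = u(x) ψ(x,y) v(y) for some positive vectors u : X → ℝ_{>0} and v : Y → ℝ_{>0}. -/
/-!
Strict positivity: at an entry where the minimiser `q` vanishes, moving towards the product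
coupling `μ ⊗ ν` by a step `t` changes the objective by at most `t · μ x ν y · log t + O(t)`,
which is negative for small `t` since `s ↦ s log s` has slope `-∞` at `0`.

Product form: once `q > 0`, the rectangle directions `(δ_x - δ_x') ⊗ (δ_y - δ_y')` have zero
marginals, so `q` can be perturbed along them in both directions. The first-order condition
says that `log (q / ψ)` has vanishing rectangle sums, i.e. `log (q / ψ) = a x + b y`, and
`u = exp a`, `v = exp b`.
-/

open Real Filter Topology

namespace Schroedinger

lemma convexOn_mul_log_div {c : ℝ} (hc : 0 < c) :
    ConvexOn ℝ (Set.Ici 0) fun s : ℝ => s * log (s / c) := by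
  refine (convexOn_mul_log.sub ((LinearMap.mulRight ℝ (log c)).concaveOn (convex_Ici 0))).congr ?_
  intro s hs
  rcases (Set.mem_Ici.1 hs).eq_or_lt with rfl | hs
  · simp
  · simp [log_div hs.ne' hc.ne', mul_sub]

lemma mul_log_div_of_mul {c t b : ℝ} (hc : 0 < c) (ht : 0 < t) (hb : 0 ≤ b) :
    t * b * log (t * b / c) = t * b * log t + t * (b * log (b / c)) := by
  rcases hb.eq_or_lt with rfl | hb
  · simp
  rw [mul_div_assoc, log_mul ht.ne' (div_pos hb hc).ne']
  ring

lemma hasDerivAt_mul_log_div {s c : ℝ} (hs : 0 < s) (hc : 0 < c) :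
    HasDerivAt (fun s => s * log (s / c)) (log (s / c) + 1) s := by
  have hlog := ((hasDerivAt_id' s).div_const c).log (div_pos hs hc).ne'
  exact ((hasDerivAt_id' s).fun_mul hlog).congr_deriv (by field_simp)

lemma exists_add_of_add_eq_add {X Y : Type*} [Nonempty X] [Nonempty Y] {G : X × Y → ℝ}
    (h : ∀ x x' y y', G (x, y) + G (x', y') = G (x, y') + G (x', y)) :
    ∃ a : X → ℝ, ∃ b : Y → ℝ, ∀ x y, G (x, y) = a x + b y := by
  obtain ⟨x₀⟩ := ‹Nonempty X›
  obtain ⟨y₀⟩ := ‹Nonempty Y›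
  exact ⟨fun x => G (x, y₀), fun y => G (x₀, y) - G (x₀, y₀), fun x y => by
    linarith [h x x₀ y y₀]⟩

section RelEntropy

variable {ι : Type*} [Fintype ι]

noncomputable def relEntropy (r ψ : ι → ℝ) : ℝ := ∑ i, r i * log (r i / ψ i)

lemma relEntropy_segment_le {q p ψ : ι → ℝ} (hq : ∀ i, 0 ≤ q i) (hp : ∀ i, 0 ≤ p i)
    (hψ : ∀ i, 0 < ψ i) {i₀ : ι} (hqi₀ : q i₀ = 0) {t : ℝ} (ht₀ : 0 < t) (ht₁ : t ≤ 1) :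
    relEntropy ((1 - t) • q + t • p) ψ ≤
      (1 - t) * relEntropy q ψ + t * relEntropy p ψ + t * p i₀ * log t := by
  classical
  have hpoint : ∀ i, ((1 - t) * q i + t * p i) * log (((1 - t) * q i + t * p i) / ψ i) ≤
      (1 - t) * (q i * log (q i / ψ i)) + t * (p i * log (p i / ψ i)) +
        if i = i₀ then t * p i₀ * log t else 0 := by
    intro i
    split_ifs with hi
    · subst hi
      rw [hqi₀, mul_zero, zero_mul, mul_zero, zero_add, zero_add,
        mul_log_div_of_mul (hψ i) ht₀ (hp i)]
      linarith
    · simpa using (convexOn_mul_log_div (hψ i)).2 (Set.mem_Ici.2 (hq i)) (Set.mem_Ici.2 (hp i))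
        (sub_nonneg.2 ht₁) ht₀.le (sub_add_cancel 1 t)
  calc relEntropy ((1 - t) • q + t • p) ψ
      ≤ ∑ i, ((1 - t) * (q i * log (q i / ψ i)) + t * (p i * log (p i / ψ i)) +
          if i = i₀ then t * p i₀ * log t else 0) := by
        simpa only [relEntropy, Pi.add_apply, Pi.smul_apply, smul_eq_mul] using
          Finset.sum_le_sum fun i _ => hpoint i
    _ = _ := by
        simp only [Finset.sum_add_distrib, ← Finset.mul_sum, Finset.sum_ite_eq', Finset.mem_univ,
          if_true, relEntropy]

lemma pos_of_isMinOn_relEntropy {S : Set (ι → ℝ)} (hS : Convex ℝ S) {q p ψ : ι → ℝ}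
    (hqS : q ∈ S) (hpS : p ∈ S) (hmin : IsMinOn (relEntropy · ψ) S q) (hq : ∀ i, 0 ≤ q i)
    (hp : ∀ i, 0 ≤ p i) (hψ : ∀ i, 0 < ψ i) {i₀ : ι} (hpi₀ : 0 < p i₀) : 0 < q i₀ := by
  refine (hq i₀).lt_of_ne' fun hqi₀ => ?_
  have hbound : ∀ t : ℝ, 0 < t → t ≤ 1 → relEntropy q ψ - relEntropy p ψ ≤ p i₀ * log t := by
    intro t ht₀ ht₁
    have hle : relEntropy q ψ ≤ relEntropy ((1 - t) • q + t • p) ψ :=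
      hmin (hS hqS hpS (sub_nonneg.2 ht₁) ht₀.le (sub_add_cancel 1 t))
    have := relEntropy_segment_le hq hp hψ hqi₀ ht₀ ht₁
    nlinarith
  have hlog : Tendsto (fun t => p i₀ * log t) (𝓝[>] 0) atBot :=
    tendsto_log_nhdsGT_zero.const_mul_atBot hpi₀
  have hunit : ∀ᶠ t in 𝓝[>] (0 : ℝ), t ∈ Set.Ioc 0 1 := Ioc_mem_nhdsGT one_pos
  obtain ⟨t, ht, ht₀, ht₁⟩ :=
    ((hlog.eventually_lt_atBot (relEntropy q ψ - relEntropy p ψ)).and hunit).exists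
  linarith [hbound t ht₀ ht₁]

lemma sum_mul_log_div_add_one_eq_zero {S : Set (ι → ℝ)} {q ψ ε : ι → ℝ}
    (hmin : IsMinOn (relEntropy · ψ) S q) (hq : ∀ i, 0 < q i) (hψ : ∀ i, 0 < ψ i)
    (hε : ∀ᶠ t in 𝓝 (0 : ℝ), q + t • ε ∈ S) :
    ∑ i, ε i * (log (q i / ψ i) + 1) = 0 := by
  have hlocal : IsLocalMin (fun t : ℝ => relEntropy (q + t • ε) ψ) 0 := by
    filter_upwards [hε] with t ht
    simpa using hmin ht
  refine hlocal.hasDerivAt_eq_zero (HasDerivAt.fun_sum fun i _ => ?_)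
  have hline : HasDerivAt (fun t : ℝ => q i + t * ε i) (ε i) 0 := by
    simpa using ((hasDerivAt_id (0 : ℝ)).mul_const (ε i)).const_add (q i)
  have := (hasDerivAt_mul_log_div (hq i) (hψ i)).comp_of_eq (0 : ℝ) hline (by simp)
  simpa [Function.comp_def, mul_comm] using this

end RelEntropy

section Couplings

variable {X Y : Type*} [Fintype X] [Fintype Y]

def couplings (μ : X → ℝ) (ν : Y → ℝ) : Set (X × Y → ℝ) :=
  {r | (∀ z, 0 ≤ r z) ∧ (∀ x, ∑ y, r (x, y) = μ x) ∧ ∀ y, ∑ x, r (x, y) = ν y}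

lemma convex_couplings (μ : X → ℝ) (ν : Y → ℝ) : Convex ℝ (couplings μ ν) := by
  rintro r ⟨hr, hrX, hrY⟩ s ⟨hs, hsX, hsY⟩ a b ha hb hab
  refine ⟨fun z => ?_, fun x => ?_, fun y => ?_⟩
  · simp only [Pi.add_apply, Pi.smul_apply, smul_eq_mul]
    exact add_nonneg (mul_nonneg ha (hr z)) (mul_nonneg hb (hs z))
  · simp only [Pi.add_apply, Pi.smul_apply, smul_eq_mul, Finset.sum_add_distrib, ← Finset.mul_sum,
      hrX, hsX, ← add_mul, hab, one_mul]
  · simp only [Pi.add_apply, Pi.smul_apply, smul_eq_mul, Finset.sum_add_distrib, ← Finset.mul_sum,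
      hrY, hsY, ← add_mul, hab, one_mul]

lemma prod_mem_couplings {μ : X → ℝ} {ν : Y → ℝ} (hμ : ∀ x, 0 ≤ μ x) (hν : ∀ y, 0 ≤ ν y)
    (hμs : ∑ x, μ x = 1) (hνs : ∑ y, ν y = 1) :
    (fun z => μ z.1 * ν z.2) ∈ couplings μ ν :=
  ⟨fun z => mul_nonneg (hμ z.1) (hν z.2), fun x => by simp only [← Finset.mul_sum, hνs, mul_one],
    fun y => by simp only [← Finset.sum_mul, hμs, one_mul]⟩

lemma eventually_add_smul_mem_couplings {μ : X → ℝ} {ν : Y → ℝ} {q ε : X × Y → ℝ}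
    (hq : q ∈ couplings μ ν) (hqpos : ∀ z, 0 < q z) (hεX : ∀ x, ∑ y, ε (x, y) = 0)
    (hεY : ∀ y, ∑ x, ε (x, y) = 0) :
    ∀ᶠ t in 𝓝 (0 : ℝ), q + t • ε ∈ couplings μ ν := by
  have hpos : ∀ᶠ t in 𝓝 (0 : ℝ), ∀ z, 0 < q z + t * ε z :=
    eventually_all.2 fun z =>
      (continuous_const.add (continuous_id.mul continuous_const)).tendsto' 0 (q z) (by simp)
        |>.eventually (lt_mem_nhds (hqpos z))
  filter_upwards [hpos] with t ht
  refine ⟨fun z => (ht z).le, fun x => ?_, fun y => ?_⟩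
  · simp only [Pi.add_apply, Pi.smul_apply, smul_eq_mul, Finset.sum_add_distrib, ← Finset.mul_sum,
      hq.2.1, hεX, mul_zero, add_zero]
  · simp only [Pi.add_apply, Pi.smul_apply, smul_eq_mul, Finset.sum_add_distrib, ← Finset.mul_sum,
      hq.2.2, hεY, mul_zero, add_zero]

lemma sum_rectangle_mul [DecidableEq X] [DecidableEq Y] (H : X × Y → ℝ) (x x' : X) (y y' : Y) :
    ∑ z, (Pi.single x 1 - Pi.single x' 1 : X → ℝ) z.1 *
        (Pi.single y 1 - Pi.single y' 1 : Y → ℝ) z.2 * H z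
      = H (x, y) - H (x, y') - H (x', y) + H (x', y') := by
  simp only [Pi.sub_apply, Pi.single_apply, mul_sub, mul_ite, mul_one, mul_zero, sub_mul,
    ite_mul, one_mul, zero_mul, Finset.sum_sub_distrib, Fintype.sum_prod_type,
    Finset.sum_ite_eq', Finset.mem_univ, ↓reduceIte]
  ring

lemma log_div_add_log_div_of_isMinOn {μ : X → ℝ} {ν : Y → ℝ} {q ψ : X × Y → ℝ}
    (hq : q ∈ couplings μ ν) (hmin : IsMinOn (relEntropy · ψ) (couplings μ ν) q)
    (hqpos : ∀ z, 0 < q z) (hψ : ∀ z, 0 < ψ z) (x x' : X) (y y' : Y) :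
    log (q (x, y) / ψ (x, y)) + log (q (x', y') / ψ (x', y')) =
      log (q (x, y') / ψ (x, y')) + log (q (x', y) / ψ (x', y)) := by
  classical
  have hα : ∑ a, (Pi.single x 1 - Pi.single x' 1 : X → ℝ) a = 0 := by simp
  have hβ : ∑ b, (Pi.single y 1 - Pi.single y' 1 : Y → ℝ) b = 0 := by simp
  have hfirst := sum_mul_log_div_add_one_eq_zero hmin hqpos hψ
    (eventually_add_smul_mem_couplings hq hqpos
      (ε := fun z => (Pi.single x 1 - Pi.single x' 1 : X → ℝ) z.1 *
        (Pi.single y 1 - Pi.single y' 1 : Y → ℝ) z.2)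
      (fun a => by simp only [← Finset.mul_sum, hβ, mul_zero])
      (fun b => by simp only [← Finset.sum_mul, hα, zero_mul]))
  rw [sum_rectangle_mul (fun z => log (q z / ψ z) + 1)] at hfirst
  linarith

end Couplings

end Schroedinger

open Schroedinger in
/-- The minimizer of the two-marginal entropic problem has Schrödinger (Sinkhorn)
product form u ψ v. -/
theorem schroedinger_structure
    {X Y : Type*} [Fintype X] [Fintype Y]
    (ψ : X × Y → ℝ) (hψ : ∀ z, 0 < ψ z)
    (μ : X → ℝ) (ν : Y → ℝ) (hμ : ∀ x, 0 < μ x) (hν : ∀ y, 0 < ν y)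
    (hμs : ∑ x, μ x = 1) (hνs : ∑ y, ν y = 1)
    (q : X × Y → ℝ) (hq0 : ∀ z, 0 ≤ q z)
    (hqX : ∀ x, ∑ y, q (x, y) = μ x) (hqY : ∀ y, ∑ x, q (x, y) = ν y)
    (hmin : ∀ r : X × Y → ℝ, (∀ z, 0 ≤ r z) → (∀ x, ∑ y, r (x, y) = μ x) →
      (∀ y, ∑ x, r (x, y) = ν y) →
      (∑ z, q z * Real.log (q z / ψ z)) ≤ ∑ z, r z * Real.log (r z / ψ z)) :
    ∃ u : X → ℝ, ∃ v : Y → ℝ, (∀ x, 0 < u x) ∧ (∀ y, 0 < v y) ∧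
      ∀ x y, q (x, y) = u x * ψ (x, y) * v y := by
  have hq : q ∈ couplings μ ν := ⟨hq0, hqX, hqY⟩
  have hqmin : IsMinOn (relEntropy · ψ) (couplings μ ν) q := fun r hr => hmin r hr.1 hr.2.1 hr.2.2
  have hqpos : ∀ z, 0 < q z := fun z =>
    pos_of_isMinOn_relEntropy (convex_couplings μ ν) hq
      (prod_mem_couplings (fun x => (hμ x).le) (fun y => (hν y).le) hμs hνs) hqmin hq0
      (fun z => mul_nonneg (hμ z.1).le (hν z.2).le) hψ (mul_pos (hμ z.1) (hν z.2))
  have : Nonempty X := by by_contra!; simp at hμs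
  have : Nonempty Y := by by_contra!; simp at hνs
  obtain ⟨a, b, hab⟩ := exists_add_of_add_eq_add (G := fun z => log (q z / ψ z))
    (log_div_add_log_div_of_isMinOn hq hqmin hqpos hψ)
  refine ⟨fun x => exp (a x), fun y => exp (b y), fun x => exp_pos _, fun y => exp_pos _,
    fun x y => ?_⟩
  rw [mul_right_comm, ← exp_add, ← hab, exp_log (div_pos (hqpos _) (hψ _)),
    div_mul_cancel₀ _ (hψ _).ne']
end
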